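/- Let α < 1 be real, let V : ℕ × ℕ → ℝ be weights, let (n_1,…,n_k) be positive integers with sum n and V(n,k) ≠ 0, let 1 ≤ r ≤ k, and let m ≥ 1. Then ∑_{k*=1}^{m} ∑_{s=k*}^{m} binom(m,s) · (∑_{partitions {B_1,…,B_{k*}} of {1,…,s} into k* blocks} ∏_{i=1}^{k*} (1−α)_{|B_i|−1↑}) · (∑_{(m_1,…,m_r)} ((m−s)!/(m_1!⋯m_r!)) · ∏_{j=1}^{r} (n_j − α)_{m_j↑}) · V(n+m, k+k*)/V(n,k) = ∑_{k*=1}^{m} (V(n+m, k+k*)/V(n,k)) · S_{m,k*}^{-1,-α, rα − (n_1+⋯+n_r)}, where the inner sum over (m_1,…,m_r) ranges over r-tuples of nonnegative integers with m_1 + ⋯ + m_r = m − s. -/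

import Mathlib

/-- Rising factorial `(x)_{n↑} = ∏_{i=0}^{n-1} (x + i)`. -/
noncomputable def risefac (x : ℝ) (n : ℕ) : ℝ := ∏ i ∈ Finset.range n, (x + i)

/-- Generalized Stirling number `S_{n,k}^{-1,-α} = (n!/k!) ∑ ∏_j (1-α)_{n_j-1↑}/n_j!`,
the sum over positive tuples `(n_1,…,n_k)` with sum `n`. -/
noncomputable def genStirling (α : ℝ) (n k : ℕ) : ℝ :=
  ((n.factorial : ℝ) / k.factorial) *
    ∑ f ∈ (Finset.Nat.antidiagonalTuple k n).filter (fun f => ∀ i, 0 < f i),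
      ∏ j, risefac (1 - α) (f j - 1) / (f j).factorial

/-- Non-central generalized Stirling number
`S_{n,k}^{-1,-α,γ} = ∑_{s=k}^n binom(n,s) S_{s,k}^{-1,-α} (−γ)_{n-s↑}`. -/
noncomputable def genStirlingNC (α γ : ℝ) (n k : ℕ) : ℝ :=
  ∑ s ∈ Finset.Icc k n, (n.choose s : ℝ) * genStirling α s k * risefac (-γ) (n - s)

/-- `P` is a partition of `{1,…,n}` (modeled as `Fin n`) into nonempty blocks. -/
def isSetPartition {n : ℕ} (P : Finset (Finset (Fin n))) : Prop :=
  ∅ ∉ P ∧ (∀ A ∈ P, ∀ B ∈ P, A ≠ B → Disjoint A B) ∧ P.sup id = Finset.univ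

instance {n : ℕ} (P : Finset (Finset (Fin n))) : Decidable (isSetPartition P) := by
  unfold isSetPartition; infer_instance

/-- The partitions of `{1,…,n}` into exactly `k` nonempty blocks. -/
def partitionsK (n k : ℕ) : Finset (Finset (Finset (Fin n))) :=
  Finset.univ.filter (fun P => isSetPartition P ∧ P.card = k)

/-!
Both sides run over the same `k*` and `s`, so it suffices to identify the two inner factors.

The sum over allocations of the `m - s` customers to the first `r` old tables is a multinomial
Vandermonde convolution, equal to `(∑_{j ≤ r} (n_j - α))_{m-s↑} = (-γ)_{m-s↑}`: the rising
factorials are the coefficients of the exponential generating function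
`∑_t (x)_{t↑} X^t / t! = (1 - X)^{-x}`, which is multiplicative in `x`.

The sum over partitions of `{1,…,s}` into `k*` blocks is `S_{s,k*}^{-1,-α}`: numbering the blocks
turns each partition into `k*!` surjections `Fin s → Fin k*`, and the maps with prescribed fibre
sizes `(n_1,…,n_{k*})` number `s!/(n_1!⋯n_{k*}!)`, as one reads off the coefficients of
`(X_1 + ⋯ + X_{k*})^s`.
-/

open Finset
open scoped Nat

theorem risefac_succ (x : ℝ) (t : ℕ) : risefac x (t + 1) = risefac x t * (x + t) :=
  prod_range_succ _ _

theorem risefac_zero_left {t : ℕ} (ht : t ≠ 0) : risefac 0 t = 0 :=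
  prod_eq_zero (mem_range.2 (Nat.pos_of_ne_zero ht)) (by simp)

theorem risefac_add (x y : ℝ) (t : ℕ) :
    risefac (x + y) t =
      ∑ ij ∈ antidiagonal t, (t.choose ij.1 : ℝ) * (risefac x ij.1 * risefac y ij.2) := by
  induction t with
  | zero => simp [risefac]
  | succ t ih =>
    rw [sum_antidiagonal_choose_succ_mul (fun i j => risefac x i * risefac y j), risefac_succ, ih,
      sum_mul, ← sum_add_distrib]
    refine sum_congr rfl fun ij hij => ?_
    have hsum : (ij.1 : ℝ) + ij.2 = t := by exact_mod_cast mem_antidiagonal.1 hij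
    rw [← Nat.choose_symm_of_eq_add (mem_antidiagonal.1 hij).symm, risefac_succ, risefac_succ]
    linear_combination -(t.choose ij.1 : ℝ) * risefac x ij.1 * risefac y ij.2 * hsum

noncomputable def risefacEGF (x : ℝ) : PowerSeries ℝ :=
  PowerSeries.mk fun t => risefac x t / t !

theorem risefacEGF_zero : risefacEGF 0 = 1 := by
  ext (_ | t)
  · simp [risefacEGF, risefac]
  · simp [risefacEGF, risefac_zero_left]

theorem risefacEGF_add (x y : ℝ) : risefacEGF (x + y) = risefacEGF x * risefacEGF y := by
  ext t
  rw [PowerSeries.coeff_mul]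
  simp only [risefacEGF, PowerSeries.coeff_mk]
  rw [risefac_add, sum_div]
  refine sum_congr rfl fun ij hij => ?_
  rw [← mem_antidiagonal.1 hij, Nat.cast_choose ℝ (Nat.le_add_right ij.1 ij.2),
    Nat.add_sub_cancel_left]
  field_simp

theorem risefacEGF_sum {ι : Type*} (s : Finset ι) (x : ι → ℝ) :
    risefacEGF (∑ i ∈ s, x i) = ∏ i ∈ s, risefacEGF (x i) := by
  induction s using Finset.cons_induction with
  | empty => simp [risefacEGF_zero]
  | cons a s ha ih => rw [sum_cons, prod_cons, risefacEGF_add, ih]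

theorem risefac_sum_div_factorial {ι : Type*} [DecidableEq ι] (s : Finset ι) (x : ι → ℝ)
    (t : ℕ) :
    risefac (∑ i ∈ s, x i) t / t ! =
      ∑ f ∈ piAntidiag s t, ∏ i ∈ s, risefac (x i) (f i) / (f i)! := by
  have hcoeff := congrArg (PowerSeries.coeff t) (risefacEGF_sum s x)
  rw [PowerSeries.coeff_prod] at hcoeff
  simp only [risefacEGF, PowerSeries.coeff_mk, finsuppAntidiag, sum_map] at hcoeff
  rw [hcoeff]
  exact sum_attach (piAntidiag s t) fun f => ∏ i ∈ s, risefac (x i) (f i) / (f i)!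

theorem sum_antidiagonalTuple_eq_risefac_sum (r t : ℕ) (x : Fin r → ℝ) :
    ∑ f ∈ Nat.antidiagonalTuple r t,
        ((t ! : ℝ) / ∏ j, ((f j)! : ℝ)) * ∏ j, risefac (x j) (f j) =
      risefac (∑ j, x j) t := by
  have hconv := risefac_sum_div_factorial univ x t
  rw [div_eq_iff (by positivity), piAntidiag_univ_fin_eq_antidiagonalTuple, sum_mul] at hconv
  rw [hconv]
  refine sum_congr rfl fun f _ => ?_
  rw [prod_div_distrib]
  ring

section Fibers
variable {ι κ : Type*} [Fintype ι] [DecidableEq κ]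

def fiberFinset (c : ι → κ) (j : κ) : Finset ι := {i | c i = j}

def fiberCard (c : ι → κ) (j : κ) : ℕ := #(fiberFinset c j)

@[simp] theorem mem_fiberFinset {c : ι → κ} {i : ι} {j : κ} :
    i ∈ fiberFinset c j ↔ c i = j := by
  simp [fiberFinset]

theorem fiberFinset_injective {c : ι → κ} (hc : Function.Surjective c) :
    Function.Injective (fiberFinset c) := by
  intro j j' h
  obtain ⟨i, rfl⟩ := hc j
  rw [← mem_fiberFinset, ← h, mem_fiberFinset]

variable [Fintype κ]

theorem sum_fiberCard (c : ι → κ) : ∑ j, fiberCard c j = Fintype.card ι := by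
  simpa [fiberCard, fiberFinset] using (card_eq_sum_card_fiberwise (f := c) (s := univ)
    (t := univ) fun _ _ => mem_univ _).symm

open MvPolynomial in
theorem card_filter_fiberCard_eq [DecidableEq ι] (f : κ → ℕ)
    (hf : ∑ j, f j = Fintype.card ι) :
    #{c : ι → κ | fiberCard c = f} = Nat.multinomial univ f := by
  have hmon : ∀ c : ι → κ, ∏ i, (X (c i) : MvPolynomial κ ℕ)
      = monomial (Finsupp.equivFunOnFinite.symm (fiberCard c)) 1 := by
    intro c
    simp only [X, ← monomial_sum_one]
    congr 2
    ext j
    rw [Finsupp.finsetSum_apply, Finsupp.coe_equivFunOnFinite_symm]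
    simp only [Finsupp.single_apply]
    rw [sum_boole]
    simp [fiberCard, fiberFinset]
  have hexpand :
      (∑ j, X j : MvPolynomial κ ℕ) ^ Fintype.card ι = ∑ c : ι → κ, ∏ i, X (c i) := by
    rw [← card_univ, ← prod_const, prod_univ_sum, Fintype.piFinset_univ]
  have hcoeff := congrArg (coeff (Finsupp.equivFunOnFinite.symm f)) hexpand
  simp only [coeff_sum_X_pow_of_fintype, coeff_sum, hmon, coeff_monomial,
    Finsupp.equivFunOnFinite.symm.injective.eq_iff] at hcoeff
  rw [sum_boole, Finsupp.sum_fintype _ _ fun _ => rfl, Finsupp.coe_equivFunOnFinite_symm,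
    if_pos hf, Finsupp.multinomial_eq_of_support_subset (subset_univ _)] at hcoeff
  exact_mod_cast hcoeff.symm

theorem sum_comp_fiberCard [DecidableEq ι] {M : Type*} [AddCommMonoid M] (F : (κ → ℕ) → M) :
    ∑ c : ι → κ, F (fiberCard c) =
      ∑ f ∈ piAntidiag univ (Fintype.card ι), Nat.multinomial univ f • F f := by
  rw [← sum_fiberwise_of_maps_to (g := fiberCard) (t := piAntidiag univ (Fintype.card ι))
    fun c _ => by simp [sum_fiberCard]]
  refine sum_congr rfl fun f hf => ?_
  rw [sum_congr rfl fun c hc => congrArg F (mem_filter.1 hc).2, sum_const,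
    card_filter_fiberCard_eq f (by simpa using hf)]

end Fibers

section Blocks
variable {s K : ℕ}

theorem isSetPartition.existsUnique_mem {P : Finset (Finset (Fin s))} (hP : isSetPartition P)
    (i : Fin s) : ∃! A, A ∈ P ∧ i ∈ A := by
  obtain ⟨-, hdisj, hcover⟩ := hP
  obtain ⟨A, hA, hiA⟩ := mem_sup.1 (hcover ▸ mem_univ i)
  refine ⟨A, ⟨hA, hiA⟩, fun B ⟨hB, hiB⟩ => ?_⟩
  by_contra hne
  exact disjoint_left.1 (hdisj B hB A hA hne) hiB hiA

noncomputable def isSetPartition.blockOf {P : Finset (Finset (Fin s))} (hP : isSetPartition P)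
    (i : Fin s) : P :=
  ⟨P.choose (i ∈ ·) (hP.existsUnique_mem i), choose_mem _ _ _⟩

theorem isSetPartition.mem_blockOf {P : Finset (Finset (Fin s))} (hP : isSetPartition P)
    (i : Fin s) : i ∈ (hP.blockOf i : Finset (Fin s)) :=
  choose_property (i ∈ ·) P (hP.existsUnique_mem i)

theorem isSetPartition.blockOf_eq {P : Finset (Finset (Fin s))} (hP : isSetPartition P)
    {i : Fin s} {A : P} (hi : i ∈ (A : Finset (Fin s))) : hP.blockOf i = A :=
  Subtype.ext <|
    (hP.existsUnique_mem i).unique ⟨(hP.blockOf i).2, hP.mem_blockOf i⟩ ⟨A.2, hi⟩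

def blocks (c : Fin s → Fin K) : Finset (Finset (Fin s)) := univ.image (fiberFinset c)

theorem blocks_mem_partitionsK {c : Fin s → Fin K} (hc : Function.Surjective c) :
    blocks c ∈ partitionsK s K := by
  refine mem_filter.2 ⟨mem_univ _, ⟨?_, ?_, ?_⟩, ?_⟩
  · simp only [blocks, mem_image, mem_univ, true_and, not_exists]
    intro j hj
    obtain ⟨i, rfl⟩ := hc j
    simpa [hj] using (mem_fiberFinset.2 rfl : i ∈ fiberFinset c (c i))
  · simp only [blocks, mem_image, mem_univ, true_and]
    rintro _ ⟨j, rfl⟩ _ ⟨j', rfl⟩ hne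
    refine disjoint_left.2 fun i hi hi' => hne ?_
    rw [← mem_fiberFinset.1 hi, ← mem_fiberFinset.1 hi']
  · refine eq_univ_of_forall fun i => mem_sup.2 ⟨fiberFinset c (c i), ?_, by simp⟩
    exact mem_image_of_mem _ (mem_univ _)
  · rw [blocks, card_image_of_injective _ (fiberFinset_injective hc), card_univ,
      Fintype.card_fin]

theorem surjective_of_blocks_mem {c : Fin s → Fin K} (hc : blocks c ∈ partitionsK s K) :
    Function.Surjective c := by
  intro j
  have hne : fiberFinset c j ≠ ∅ := fun h =>
    (mem_filter.1 hc).2.1.1 (h ▸ mem_image_of_mem _ (mem_univ j))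
  obtain ⟨i, hi⟩ := nonempty_iff_ne_empty.2 hne
  exact ⟨i, mem_fiberFinset.1 hi⟩

theorem card_filter_blocks_eq {P : Finset (Finset (Fin s))} (hP : P ∈ partitionsK s K) :
    #{c : Fin s → Fin K | blocks c = P} = K ! := by
  obtain ⟨hpart, hcard⟩ := (mem_filter.1 hP).2
  have fiberFinset_eq (e : Fin K ≃ P) (j : Fin K) :
      fiberFinset (fun i => e.symm (hpart.blockOf i)) j = e j := by
    ext i
    rw [mem_fiberFinset, Equiv.symm_apply_eq]
    exact ⟨fun h => h ▸ hpart.mem_blockOf i, hpart.blockOf_eq⟩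
  have hequiv : Fintype.card (Fin K ≃ P) = K ! := by
    rw [Fintype.card_equiv (Fintype.equivOfCardEq (by simp [hcard]))]
    simp
  rw [← hequiv, ← card_univ]
  refine card_bij' (fun c hc => Equiv.ofBijective
      (fun j => ⟨fiberFinset c j, (mem_filter.1 hc).2 ▸ mem_image_of_mem _ (mem_univ j)⟩)
      ⟨?_, ?_⟩)
    (fun e _ i => e.symm (hpart.blockOf i)) (fun _ _ => mem_univ _) ?_ ?_ ?_
  · exact fun j j' h => fiberFinset_injective
      (surjective_of_blocks_mem ((mem_filter.1 hc).2 ▸ hP)) (congrArg Subtype.val h)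
  · rintro ⟨A, hA⟩
    rw [← (mem_filter.1 hc).2] at hA
    obtain ⟨j, -, rfl⟩ := mem_image.1 hA
    exact ⟨j, rfl⟩
  · intro e _
    refine mem_filter.2 ⟨mem_univ _, ?_⟩
    rw [blocks, funext (fiberFinset_eq e)]
    ext A
    simp only [mem_image, mem_univ, true_and]
    exact ⟨by rintro ⟨j, rfl⟩; exact (e j).2, fun hA => ⟨e.symm ⟨A, hA⟩, by simp⟩⟩
  · intro c _
    funext i
    rw [Equiv.symm_apply_eq]
    exact hpart.blockOf_eq (mem_fiberFinset.2 rfl)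
  · exact fun e _ => Equiv.ext fun j => Subtype.ext (fiberFinset_eq e j)

theorem factorial_mul_sum_partitionsK (w : ℕ → ℝ) (hw : w 0 = 0) :
    K ! * ∑ P ∈ partitionsK s K, ∏ A ∈ P, w #A =
      ∑ c : Fin s → Fin K, ∏ j, w (fiberCard c j) := by
  have hsurj :
      ∀ c : Fin s → Fin K, ∏ j, w (fiberCard c j) ≠ 0 → blocks c ∈ partitionsK s K := by
    intro c hc
    refine blocks_mem_partitionsK fun j => ?_
    obtain ⟨i, hi⟩ : (fiberFinset c j).Nonempty := by
      rw [nonempty_iff_ne_empty]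
      intro h
      exact hc (prod_eq_zero (mem_univ j) (by simp [fiberCard, h, hw]))
    exact ⟨i, mem_fiberFinset.1 hi⟩
  rw [← sum_filter_of_ne fun c _ => hsurj c,
    ← sum_fiberwise_of_maps_to (g := blocks) fun c hc => (mem_filter.1 hc).2, mul_sum]
  refine sum_congr rfl fun P hP => ?_
  have hprod : ∀ c ∈ ({c | blocks c = P} : Finset (Fin s → Fin K)),
      ∏ j, w (fiberCard c j) = ∏ A ∈ P, w #A := by
    intro c hc
    rw [← (mem_filter.1 hc).2, blocks, prod_image fun j _ j' _ h =>
      fiberFinset_injective (surjective_of_blocks_mem ((mem_filter.1 hc).2 ▸ hP)) h]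
    rfl
  rw [filter_filter, filter_congr fun c _ => and_iff_right_of_imp fun h => h ▸ hP,
    sum_congr rfl hprod, sum_const, card_filter_blocks_eq hP, nsmul_eq_mul]

end Blocks

theorem sum_partitionsK_eq_genStirling (α : ℝ) (s K : ℕ) :
    ∑ P ∈ partitionsK s K, ∏ A ∈ P, risefac (1 - α) (#A - 1) = genStirling α s K := by
  set w : ℕ → ℝ := fun t => if t = 0 then 0 else risefac (1 - α) (t - 1) with hw
  have hK : (K ! : ℝ) ≠ 0 := by positivity
  have hpart :
      ∀ P ∈ partitionsK s K, ∏ A ∈ P, risefac (1 - α) (#A - 1) = ∏ A ∈ P, w #A := by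
    refine fun P hP => prod_congr rfl fun A hA => ?_
    have hA0 : #A ≠ 0 := fun h => (mem_filter.1 hP).2.1.1 (card_eq_zero.1 h ▸ hA)
    simp [hw, hA0]
  have hpos :
      ∀ f ∈ Nat.antidiagonalTuple K s, ∏ j, w (f j) / (f j)! ≠ 0 → ∀ j, 0 < f j := by
    intro f _ hf j
    by_contra h
    exact hf (prod_eq_zero (mem_univ j) (by simp [hw, Nat.eq_zero_of_not_pos h]))
  have hfilter : ∑ f ∈ Nat.antidiagonalTuple K s with ∀ j, 0 < f j,
      ∏ j, risefac (1 - α) (f j - 1) / (f j)! =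
        ∑ f ∈ Nat.antidiagonalTuple K s, ∏ j, w (f j) / (f j)! := by
    rw [← sum_filter_of_ne hpos]
    exact sum_congr rfl fun f hf => prod_congr rfl fun j _ => by
      simp [hw, ((mem_filter.1 hf).2 j).ne']
  have hmultinomial : ∀ f ∈ Nat.antidiagonalTuple K s,
      Nat.multinomial univ f • ∏ j, w (f j) = (s ! : ℝ) * ∏ j, w (f j) / (f j)! := by
    intro f hf
    have hspec := Nat.multinomial_spec univ f
    rw [Nat.mem_antidiagonalTuple.1 hf] at hspec
    rw [nsmul_eq_mul, prod_div_distrib, ← hspec]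
    push_cast
    field_simp
  rw [sum_congr rfl hpart, ← mul_right_inj' hK, factorial_mul_sum_partitionsK w (by simp [hw]),
    sum_comp_fiberCard fun f => ∏ j, w (f j), genStirling, ← mul_assoc, mul_div_cancel₀ _ hK,
    hfilter, Fintype.card_fin, piAntidiag_univ_fin_eq_antidiagonalTuple, mul_sum,
    sum_congr rfl hmultinomial]

theorem gibbs_avoid_old_tables_general (α : ℝ) (V : ℕ → ℕ → ℝ)
    (k : ℕ) (nvec : Fin k → ℕ) (n : ℕ) (r : ℕ) (hrk : r ≤ k) (m : ℕ) :
    ∑ kstar ∈ Finset.Icc 1 m, ∑ s ∈ Finset.Icc kstar m,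
        (m.choose s : ℝ) *
          (∑ P ∈ partitionsK s kstar, ∏ A ∈ P, risefac (1 - α) (A.card - 1)) *
          (∑ f ∈ Finset.Nat.antidiagonalTuple r (m - s),
            (((m - s).factorial : ℝ) / ∏ j, ((f j).factorial : ℝ)) *
              ∏ j : Fin r, risefac ((nvec (Fin.castLE hrk j) : ℝ) - α) (f j)) *
          (V (n + m) (k + kstar) / V n k)
      = ∑ kstar ∈ Finset.Icc 1 m,
          (V (n + m) (k + kstar) / V n k) *
            genStirlingNC α (r * α - ∑ j : Fin r, (nvec (Fin.castLE hrk j) : ℝ)) m kstar := by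
  have hshift : ∑ j : Fin r, ((nvec (Fin.castLE hrk j) : ℝ) - α)
      = -(r * α - ∑ j : Fin r, (nvec (Fin.castLE hrk j) : ℝ)) := by
    rw [sum_sub_distrib, sum_const, card_univ, Fintype.card_fin, nsmul_eq_mul]
    ring
  refine sum_congr rfl fun kstar _ => ?_
  rw [genStirlingNC, mul_sum]
  refine sum_congr rfl fun s _ => ?_
  rw [sum_partitionsK_eq_genStirling, sum_antidiagonalTuple_eq_risefac_sum, hshift]
  ring

/-- Probability that the `m` new customers avoid a given subset of `k − r` old tables, for a
Gibbs partition of type `α`: the sum over the number `k*` of new tables, the number `s` of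
customers at new tables, the partitions of those `s` customers, and the allocations of the
remaining `m − s` customers among the first `r` old tables, equals
`∑_{k*=1}^m (V(n+m,k+k*)/V(n,k)) S_{m,k*}^{-1,-α, rα−(n_1+⋯+n_r)}`. -/
theorem gibbs_avoid_old_tables (α : ℝ) (hα : α < 1) (V : ℕ → ℕ → ℝ)
    (k : ℕ) (nvec : Fin k → ℕ) (hpos : ∀ j, 0 < nvec j)
    (n : ℕ) (hsum : ∑ j, nvec j = n) (hVn : V n k ≠ 0)
    (r : ℕ) (hr1 : 1 ≤ r) (hrk : r ≤ k) (m : ℕ) (hm : 1 ≤ m) :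
    ∑ kstar ∈ Finset.Icc 1 m, ∑ s ∈ Finset.Icc kstar m,
        (m.choose s : ℝ) *
          (∑ P ∈ partitionsK s kstar, ∏ A ∈ P, risefac (1 - α) (A.card - 1)) *
          (∑ f ∈ Finset.Nat.antidiagonalTuple r (m - s),
            (((m - s).factorial : ℝ) / ∏ j, ((f j).factorial : ℝ)) *
              ∏ j : Fin r, risefac ((nvec (Fin.castLE hrk j) : ℝ) - α) (f j)) *
          (V (n + m) (k + kstar) / V n k)
      = ∑ kstar ∈ Finset.Icc 1 m,
          (V (n + m) (k + kstar) / V n k) *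
            genStirlingNC α (r * α - ∑ j : Fin r, (nvec (Fin.castLE hrk j) : ℝ)) m kstar :=
  gibbs_avoid_old_tables_general α V k nvec n r hrk m
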